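/- The sequence of partial products N ↦ ∏_{k=0}^{N-1} (1/2) · tan(π·2^{-k-1}/6) · cot(π·2^{-k-2}/6) converges, as N → ∞, to 12·(2-√3)/π. -/

import Mathlib

/-!
Since `tan y * cot (y / 2) / 2 = tan y / (2 * tan (y / 2))`, the partial products telescope:
with `x = π / 12` the `N`-th one is `tan x / (2 ^ N * tan (x / 2 ^ N))`. As `tan t ~ t` at `0`,
the denominator tends to `x`, so the products tend to `tan (π / 12) / (π / 12)`, and
`tan (π / 12) = 2 - √3` by the half-angle formula `tan y * sin (2 * y) = 1 - cos (2 * y)`.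
-/

open Real Finset Filter Topology

lemma tan_div_two_pow_pos {x : ℝ} (hx₀ : 0 < x) (hx : x < π / 2) (n : ℕ) :
    0 < tan (x / 2 ^ n) := by
  apply tan_pos_of_pos_of_lt_pi_div_two (by positivity)
  calc x / 2 ^ n ≤ x := div_le_self hx₀.le (one_le_pow₀ one_le_two)
    _ < π / 2 := hx

lemma prod_tan_mul_cot_mul_two_pow_mul_tan {x : ℝ} (hx₀ : 0 < x) (hx : x < π) (N : ℕ) :
    (∏ k ∈ range N, 1 / 2 * tan (x / 2 ^ k) * cot (x / 2 ^ (k + 1))) *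
      (2 ^ N * tan (x / 2 ^ N)) = tan x := by
  induction N with
  | zero => simp
  | succ N ih =>
    have hy : tan (x / 2 ^ (N + 1)) ≠ 0 := by
      rw [pow_succ', ← div_div]
      exact (tan_div_two_pow_pos (half_pos hx₀) (by linarith) N).ne'
    rw [← ih, prod_range_succ, ← tan_inv_eq_cot]
    field_simp
    ring

lemma tendsto_two_pow_mul_tan_div_two_pow (x : ℝ) :
    Tendsto (fun N : ℕ => 2 ^ N * tan (x / 2 ^ N)) atTop (𝓝 x) := by
  rcases eq_or_ne x 0 with rfl | hx
  · simp
  have hslope : Tendsto (fun t => t⁻¹ * tan t) (𝓝[≠] 0) (𝓝 1) := by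
    simpa using (hasDerivAt_tan (x := 0) (by simp)).tendsto_slope_zero
  have ht : Tendsto (fun N : ℕ => x / 2 ^ N) atTop (𝓝[≠] 0) :=
    tendsto_nhdsWithin_of_tendsto_nhds_of_eventually_within _
      (tendsto_const_nhds.div_atTop (tendsto_pow_atTop_atTop_of_one_lt one_lt_two))
      (.of_forall fun N => div_ne_zero hx (by positivity))
  convert (hslope.comp ht).const_mul x using 2 with N
  · simp only [Function.comp_apply, inv_div]
    field_simp
  · rw [mul_one]

lemma tan_mul_sin_two_mul {x : ℝ} (h : cos x ≠ 0) : tan x * sin (2 * x) = 1 - cos (2 * x) := by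
  rw [tan_eq_sin_div_cos, sin_two_mul, cos_two_mul, cos_sq']
  field_simp
  ring

lemma tan_pi_div_twelve : tan (π / 12) = 2 - √3 := by
  have hcos : cos (π / 12) ≠ 0 :=
    (cos_pos_of_mem_Ioo ⟨by linarith [pi_pos], by linarith [pi_pos]⟩).ne'
  have h := tan_mul_sin_two_mul hcos
  rw [show 2 * (π / 12) = π / 6 by ring, sin_pi_div_six, cos_pi_div_six] at h
  linarith

theorem tan_product_pi_div_six :
    Filter.Tendsto
      (fun N : ℕ => ∏ k ∈ Finset.range N,
        (1 / 2 : ℝ) * Real.tan (Real.pi * (2 : ℝ) ^ (-(k : ℤ) - 1) / 6) *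
          Real.cot (Real.pi * (2 : ℝ) ^ (-(k : ℤ) - 2) / 6))
      Filter.atTop (𝓝 (12 * (2 - Real.sqrt 3) / Real.pi)) := by
  set x := π / 12
  have hx₀ : 0 < x := by positivity
  have hx : x < π / 2 := by simp only [x]; linarith [pi_pos]
  have hangle₁ (k : ℕ) : π * (2 : ℝ) ^ (-(k : ℤ) - 1) / 6 = x / 2 ^ k := by
    rw [zpow_sub₀ two_ne_zero, zpow_neg, zpow_natCast]
    field_simp
    ring
  have hangle₂ (k : ℕ) : π * (2 : ℝ) ^ (-(k : ℤ) - 2) / 6 = x / 2 ^ (k + 1) := by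
    rw [zpow_sub₀ two_ne_zero, zpow_neg, zpow_natCast]
    field_simp
    ring
  have hprod (N : ℕ) : ∏ k ∈ range N, 1 / 2 * tan (π * (2 : ℝ) ^ (-(k : ℤ) - 1) / 6) *
      cot (π * (2 : ℝ) ^ (-(k : ℤ) - 2) / 6) = tan x / (2 ^ N * tan (x / 2 ^ N)) := by
    rw [eq_div_iff (by positivity [tan_div_two_pow_pos hx₀ hx N]),
      ← prod_tan_mul_cot_mul_two_pow_mul_tan hx₀ (hx.trans (half_lt_self pi_pos)) N]
    simp only [hangle₁, hangle₂]
  have hlim : tan x / x = 12 * (2 - √3) / π := by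
    rw [tan_pi_div_twelve]
    field_simp
    ring
  simp only [hprod, ← hlim]
  exact tendsto_const_nhds.div (tendsto_two_pow_mul_tan_div_two_pow x) hx₀.ne'
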